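/- arXiv:1310.8353 — 2 statements merged into one kernel-verified Lean document; each statement's English description precedes it below -/
import Mathlib

section
/- Kelvin's circulation theorem for a closed curve: under the hypotheses of Euler flow transport, for any C¹ closed curve η : [0,1] → ℝ^d, the circulation ∮ u(Qₜ(η(s)), t) · d/ds Qₜ(η(s)) ds is independent of t. -/
/-!
Write `X(t, s) = Qₜ(η(s))` and `U(t, s) = u(X(t, s), t)`. Along particle paths `∂ₜX = U`, and the
Euler equation says `∂ₜU = -∇P(X)`; formally the circulation `Γ(t) = ∫ U ⬝ᵥ ∂ₛX` then has
`Γ' = ∫ (-∇P(X) ⬝ᵥ ∂ₛX + U ⬝ᵥ ∂ₛU) = ∫ ∂ₛ(|U|²/2 - P(X)) = 0` on the closed curve.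
Since `Qₜ` is only known to be `C¹` in space for each fixed `t`, the mixed derivative `∂ₜ∂ₛX` is
not available. Instead `Γ(t) - Γ(t₀)` is integrated by parts in `s`, which leaves only `∂ₜX`,
`∂ₜU` and a bound on `∂ₛU` uniform in `t` near `t₀`. That bound, and the joint continuity of
`X`, come from Grönwall's inequality: the flow is Lipschitz in the initial point on compact sets,
uniformly on compact time intervals.
-/

open Matrix Set Metric Real Filter Topology
open scoped NNReal

section Trajectories

variable {E : Type*} [NormedAddCommGroup E] [NormedSpace ℝ E]
  {v : ℝ → E → E} {f g : ℝ → E} {K : Set E} {L : ℝ≥0} {T r : ℝ}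

lemma hasDerivAt_comp_neg_of_forall_hasDerivAt (hf : ∀ t, HasDerivAt f (v t (f t)) t) (t : ℝ) :
    HasDerivAt (fun τ => f (-τ)) (-v (-t) (f (-t))) t := by
  simpa [Function.comp_def] using (hf (-t)).scomp t (hasDerivAt_neg t)

/-- If `f` ever reached distance `r` from `g`, Grönwall's inequality up to the first such time
would contradict `hr`. -/
lemma dist_trajectories_le_of_tube_subset_of_nonneg
    (hv : ∀ t ∈ Icc 0 T, LipschitzOnWith L (v t) K)
    (hf : ∀ t, HasDerivAt f (v t (f t)) t) (hg : ∀ t, HasDerivAt g (v t (g t)) t)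
    (hK : ∀ t ∈ Icc 0 T, closedBall (g t) r ⊆ K) (hr : dist (f 0) (g 0) * exp (L * T) < r) :
    ∀ t ∈ Icc 0 T, dist (f t) (g t) ≤ dist (f 0) (g 0) * exp (L * T) := by
  have hfc : Continuous f := continuous_iff_continuousAt.2 fun t => (hf t).continuousAt
  have hgc : Continuous g := continuous_iff_continuousAt.2 fun t => (hg t).continuousAt
  have hr₀ : 0 ≤ r := (by positivity : 0 ≤ dist (f 0) (g 0) * exp (L * T)).trans hr.le
  have hsub : ∀ t ∈ Icc 0 T, Ico 0 t ⊆ Icc 0 T := fun t ht =>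
    Ico_subset_Icc_self.trans (Icc_subset_Icc_right ht.2)
  have gronwall : ∀ t ∈ Icc 0 T, (∀ τ ∈ Ico 0 t, dist (f τ) (g τ) ≤ r) →
      dist (f t) (g t) ≤ dist (f 0) (g 0) * exp (L * T) := by
    intro t ht hclose
    have := dist_le_of_trajectories_ODE_of_mem (s := fun _ => K)
      (fun τ hτ => hv τ (hsub t ht hτ)) hfc.continuousOn (fun τ _ => (hf τ).hasDerivWithinAt)
      (fun τ hτ => hK τ (hsub t ht hτ) (hclose τ hτ)) hgc.continuousOn
      (fun τ _ => (hg τ).hasDerivWithinAt)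
      (fun τ hτ => hK τ (hsub t ht hτ) (mem_closedBall_self hr₀)) le_rfl t (right_mem_Icc.2 ht.1)
    refine this.trans (mul_le_mul_of_nonneg_left (exp_le_exp.2 ?_) dist_nonneg)
    exact mul_le_mul_of_nonneg_left (by linarith [ht.2]) L.coe_nonneg
  suffices inside : ∀ t ∈ Icc 0 T, dist (f t) (g t) < r from fun t ht =>
    gronwall t ht fun τ hτ => (inside τ (hsub t ht hτ)).le
  by_contra! hexit
  have hB : IsCompact {t ∈ Icc 0 T | r ≤ dist (f t) (g t)} :=
    isCompact_Icc.inter_right (isClosed_le continuous_const (hfc.dist hgc))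
  obtain ⟨t, ⟨ht, hrt⟩, hfirst⟩ := hB.exists_isLeast hexit
  refine (hrt.trans (gronwall t ht fun τ hτ => ?_)).not_gt hr
  exact (not_le.1 fun h => hτ.2.not_ge (hfirst ⟨hsub t ht hτ, h⟩)).le

lemma dist_trajectories_le_of_tube_subset (hT : 0 ≤ T)
    (hv : ∀ t ∈ Icc (-T) T, LipschitzOnWith L (v t) K)
    (hf : ∀ t, HasDerivAt f (v t (f t)) t) (hg : ∀ t, HasDerivAt g (v t (g t)) t)
    (hK : ∀ t ∈ Icc (-T) T, closedBall (g t) r ⊆ K) (hr : dist (f 0) (g 0) * exp (L * T) < r) :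
    ∀ t ∈ Icc (-T) T, dist (f t) (g t) ≤ dist (f 0) (g 0) * exp (L * T) := by
  have hpos : Icc 0 T ⊆ Icc (-T) T := Icc_subset_Icc_left (by linarith)
  have hneg : ∀ t ∈ Icc 0 T, -t ∈ Icc (-T) T := fun t ht => ⟨by linarith [ht.2], by linarith [ht.1]⟩
  intro t ht
  rcases le_total 0 t with h | h
  · exact dist_trajectories_le_of_tube_subset_of_nonneg (fun τ hτ => hv τ (hpos hτ)) hf hg
      (fun τ hτ => hK τ (hpos hτ)) hr t ⟨h, ht.2⟩
  · have := dist_trajectories_le_of_tube_subset_of_nonneg (v := fun τ x => -v (-τ) x)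
      (fun τ hτ => (hv (-τ) (hneg τ hτ)).neg) (hasDerivAt_comp_neg_of_forall_hasDerivAt hf)
      (hasDerivAt_comp_neg_of_forall_hasDerivAt hg) (fun τ hτ => hK (-τ) (hneg τ hτ))
      (by simpa using hr) (-t) ⟨by linarith, by linarith [ht.1]⟩
    simpa using this

end Trajectories

section Flow

variable {E : Type*} [NormedAddCommGroup E] {v : ℝ → E → E}

lemma LocallyLipschitz.exists_lipschitzOnWith_section
    (hv : LocallyLipschitz (fun p : E × ℝ => v p.2 p.1)) {K : Set E} (hK : IsCompact K)
    {J : Set ℝ} (hJ : IsCompact J) : ∃ L, ∀ t ∈ J, LipschitzOnWith L (v t) K := by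
  obtain ⟨L, hL⟩ := hv.locallyLipschitzOn.exists_lipschitzOnWith_of_compact (hK.prod hJ)
  refine ⟨L, fun t ht => ?_⟩
  simpa [Function.comp_def] using
    hL.comp (LipschitzWith.prodMk_right t).lipschitzOnWith fun x hx => ⟨hx, ht⟩

variable [NormedSpace ℝ E]

def IsFlow (v Φ : ℝ → E → E) : Prop :=
  (∀ x t, HasDerivAt (fun τ => Φ τ x) (v t (Φ t x)) t) ∧ ∀ x, Φ 0 x = x

variable [ProperSpace E] {Φ : ℝ → E → E}

lemma IsFlow.exists_norm_le (hΦ : IsFlow v Φ)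
    (hv : LocallyLipschitz (fun p : E × ℝ => v p.2 p.1))
    {S : Set E} (hS : IsCompact S) {T : ℝ} (hT : 0 ≤ T) :
    ∃ R, ∀ x ∈ S, ∀ t ∈ Icc (-T) T, ‖Φ t x‖ ≤ R := by
  refine hS.induction_on (p := fun A => ∃ R, ∀ x ∈ A, ∀ t ∈ Icc (-T) T, ‖Φ t x‖ ≤ R)
    ⟨0, by simp⟩ (fun A B hAB ⟨R, hR⟩ => ⟨R, fun x hx => hR x (hAB hx)⟩) ?_ ?_
  · rintro A B ⟨R₁, h₁⟩ ⟨R₂, h₂⟩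
    refine ⟨max R₁ R₂, ?_⟩
    rintro x (hx | hx) t ht
    exacts [(h₁ x hx t ht).trans (le_max_left _ _), (h₂ x hx t ht).trans (le_max_right _ _)]
  intro x₀ _
  have hγ : Continuous fun t => Φ t x₀ :=
    continuous_iff_continuousAt.2 fun t => (hΦ.1 x₀ t).continuousAt
  obtain ⟨R₀, hR₀⟩ :=
    (isCompact_Icc (a := -T) (b := T)).exists_bound_of_continuousOn hγ.continuousOn
  obtain ⟨L, hL⟩ := hv.exists_lipschitzOnWith_section (isCompact_closedBall 0 (R₀ + 1))
    (isCompact_Icc (a := -T) (b := T))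
  refine ⟨ball x₀ (exp (-(L * T))), mem_nhdsWithin_of_mem_nhds (ball_mem_nhds _ (exp_pos _)),
    R₀ + 1, fun x hx t ht => ?_⟩
  have hstart : dist (Φ 0 x) (Φ 0 x₀) * exp (L * T) < 1 := by
    rw [hΦ.2, hΦ.2]
    calc dist x x₀ * exp (L * T) < exp (-(L * T)) * exp (L * T) :=
          mul_lt_mul_of_pos_right hx (exp_pos _)
      _ = 1 := by rw [← exp_add, neg_add_cancel, exp_zero]
  have := dist_trajectories_le_of_tube_subset hT hL (hΦ.1 x) (hΦ.1 x₀)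
    (fun τ hτ => closedBall_subset_closedBall' (by rw [dist_zero_right]; linarith [hR₀ τ hτ]))
    hstart t ht
  calc ‖Φ t x‖ ≤ ‖Φ t x₀‖ + dist (Φ t x) (Φ t x₀) := by
        rw [dist_eq_norm]; exact norm_le_norm_add_norm_sub' _ _
    _ ≤ R₀ + 1 := add_le_add (hR₀ t ht) (this.trans hstart.le)

lemma IsFlow.exists_lipschitzOnWith (hΦ : IsFlow v Φ)
    (hv : LocallyLipschitz (fun p : E × ℝ => v p.2 p.1))
    {S : Set E} (hS : IsCompact S) {T : ℝ} (hT : 0 ≤ T) :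
    ∃ C, ∀ t ∈ Icc (-T) T, LipschitzOnWith C (Φ t) S := by
  obtain ⟨R, hR⟩ := hΦ.exists_norm_le hv hS hT
  obtain ⟨L, hL⟩ := hv.exists_lipschitzOnWith_section (isCompact_closedBall 0 (R + 1))
    (isCompact_Icc (a := -T) (b := T))
  refine ⟨Real.toNNReal ((1 + 2 * R) * exp (L * T)), fun t ht =>
    LipschitzOnWith.of_dist_le' fun x hx y hy => ?_⟩
  have hR₀ : 0 ≤ R := (norm_nonneg _).trans (hR x hx t ht)
  have hexp : 0 < exp (L * T) := exp_pos _
  -- close initial points stay in the unit tube around each other; far ones cost at most `2R`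
  by_cases hclose : dist x y * exp (L * T) < 1
  · have hstart : dist (Φ 0 x) (Φ 0 y) * exp (L * T) < 1 := by rwa [hΦ.2, hΦ.2]
    have := dist_trajectories_le_of_tube_subset hT hL (hΦ.1 x) (hΦ.1 y)
      (fun τ hτ => closedBall_subset_closedBall' (by rw [dist_zero_right]; linarith [hR y hy τ hτ]))
      hstart t ht
    rw [hΦ.2, hΦ.2] at this
    nlinarith [mul_nonneg (mul_nonneg hR₀ hexp.le) (dist_nonneg (x := x) (y := y))]
  · calc dist (Φ t x) (Φ t y) ≤ ‖Φ t x‖ + ‖Φ t y‖ := dist_le_norm_add_norm _ _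
      _ ≤ 2 * R := by linarith [hR x hx t ht, hR y hy t ht]
      _ ≤ (1 + 2 * R) * exp (L * T) * dist x y := by nlinarith

lemma IsFlow.exists_lipschitzOnWith_velocity (hΦ : IsFlow v Φ)
    (hv : LocallyLipschitz (fun p : E × ℝ => v p.2 p.1))
    {S : Set E} (hS : IsCompact S) {T : ℝ} (hT : 0 ≤ T) :
    ∃ C, ∀ t ∈ Icc (-T) T, LipschitzOnWith C (fun x => v t (Φ t x)) S := by
  obtain ⟨R, hR⟩ := hΦ.exists_norm_le hv hS hT
  obtain ⟨L, hL⟩ := hv.exists_lipschitzOnWith_section (isCompact_closedBall 0 R)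
    (isCompact_Icc (a := -T) (b := T))
  obtain ⟨C, hC⟩ := hΦ.exists_lipschitzOnWith hv hS hT
  exact ⟨L * C, fun t ht => (hL t ht).comp (hC t ht) fun x hx =>
    mem_closedBall_zero_iff.2 (hR x hx t ht)⟩

lemma IsFlow.continuous_uncurry (hΦ : IsFlow v Φ)
    (hv : LocallyLipschitz (fun p : E × ℝ => v p.2 p.1)) :
    Continuous (Function.uncurry Φ) := by
  refine continuous_iff_continuousAt.2 fun ⟨t₀, x₀⟩ => ?_
  obtain ⟨C, hC⟩ := hΦ.exists_lipschitzOnWith hv (isCompact_closedBall x₀ 1)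
    (by positivity : 0 ≤ |t₀| + 1)
  have hcont := continuousOn_prod_of_continuousOn_lipschitzOnWith' (Function.uncurry Φ) C hC
    fun x _ => (continuous_iff_continuousAt.2 fun t => (hΦ.1 x t).continuousAt).continuousOn
  exact hcont.continuousAt (prod_mem_nhds
    (Icc_mem_nhds (by linarith [neg_abs_le t₀]) (by linarith [le_abs_self t₀]))
    (closedBall_mem_nhds x₀ one_pos))

lemma IsFlow.eventually_norm_deriv_velocity_comp_le (hΦ : IsFlow v Φ)
    (hv : LocallyLipschitz (fun p : E × ℝ => v p.2 p.1))
    {γ : ℝ → E} (hγ : LocallyLipschitz γ) (t₀ : ℝ) :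
    ∃ C, ∀ᶠ t in 𝓝 t₀, ∀ s ∈ Icc (0:ℝ) 1, ‖deriv (fun σ => v t (Φ t (γ σ))) s‖ ≤ C := by
  obtain ⟨Cγ, hCγ⟩ := hγ.locallyLipschitzOn.exists_lipschitzOnWith_of_compact
    (isCompact_Icc (a := (-1:ℝ)) (b := 2))
  obtain ⟨C, hC⟩ := hΦ.exists_lipschitzOnWith_velocity hv
    (isCompact_Icc.image_of_continuousOn hγ.continuous.continuousOn) (by positivity : 0 ≤ |t₀| + 1)
  refine ⟨C * Cγ, ?_⟩
  filter_upwards [Icc_mem_nhds (by linarith [neg_abs_le t₀] : -(|t₀| + 1) < t₀)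
    (by linarith [le_abs_self t₀] : t₀ < |t₀| + 1)] with t ht s hs
  exact norm_deriv_le_of_lipschitzOn (Icc_mem_nhds (by linarith [hs.1]) (by linarith [hs.2]))
    ((hC t ht).comp hCγ (mapsTo_image _ _))

end Flow

section UniformDerivative

variable {α F : Type*} [PseudoMetricSpace α] [NormedAddCommGroup F] [NormedSpace ℝ F]

lemma eventually_norm_sub_sub_smul_le {f f' : ℝ → α → F} {S : Set α} (hS : IsCompact S)
    (hf : ∀ s ∈ S, ∀ τ, HasDerivAt (f · s) (f' τ s) τ) {t₀ : ℝ}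
    (hf' : ContinuousOn (fun p : ℝ × α => f' p.1 p.2) (closedBall t₀ 1 ×ˢ S)) {ε : ℝ}
    (hε : 0 < ε) :
    ∀ᶠ t in 𝓝 t₀, ∀ c ∈ uIcc t₀ t, ∀ s ∈ S,
      ‖f t s - f t₀ s - (t - t₀) • f' c s‖ ≤ ε * |t - t₀| := by
  obtain ⟨δ, hδ, hU⟩ := Metric.uniformContinuousOn_iff.1
    (((isCompact_closedBall t₀ 1).prod hS).uniformContinuousOn_of_continuous hf') ε hε
  filter_upwards [ball_mem_nhds t₀ (lt_min hδ one_pos)] with t ht c hc s hs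
  have hmem : ∀ τ ∈ uIcc t₀ t, (τ, s) ∈ closedBall t₀ 1 ×ˢ S := fun τ hτ =>
    ⟨mem_closedBall.2 (((Real.dist_le_of_mem_uIcc hτ left_mem_uIcc).trans_lt
      ((dist_comm t₀ t).trans_lt ht)).le.trans (min_le_right _ _)), hs⟩
  have hbound : ∀ τ ∈ uIcc t₀ t, ‖f' τ s - (1 : ℝ) • f' c s‖ ≤ ε := by
    intro τ hτ
    rw [one_smul, ← dist_eq_norm]
    refine (hU _ (hmem τ hτ) _ (hmem c hc) ?_).le
    rw [Prod.dist_eq, dist_self, max_eq_left dist_nonneg]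
    exact (Real.dist_le_of_mem_uIcc hτ hc).trans_lt
      ((dist_comm t₀ t).trans_lt (ht.trans_le (min_le_left _ _)))
  have := (convex_uIcc t₀ t).norm_image_sub_le_of_norm_hasDerivWithin_le
    (f := fun τ => f τ s - τ • f' c s)
    (fun τ _ => ((hf s hs τ).sub ((hasDerivAt_id τ).smul_const (f' c s))).hasDerivWithinAt)
    hbound left_mem_uIcc right_mem_uIcc
  rwa [Real.norm_eq_abs, show f t s - t • f' c s - (f t₀ s - t₀ • f' c s)
    = f t s - f t₀ s - (t - t₀) • f' c s by rw [sub_smul]; abel] at this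

end UniformDerivative

section Sections

variable {E F : Type*} [NormedAddCommGroup E] [NormedSpace ℝ E] [NormedAddCommGroup F]
  [NormedSpace ℝ F] {Ψ : E × ℝ → F}

lemma fderiv_section_eq {y : E} {t : ℝ} (hΨ : DifferentiableAt ℝ Ψ (y, t)) :
    fderiv ℝ (fun z => Ψ (z, t)) y = (fderiv ℝ Ψ (y, t)).comp (ContinuousLinearMap.inl ℝ E ℝ) :=
  (hΨ.hasFDerivAt.comp y (hasFDerivAt_prodMk_left y t)).fderiv

lemma continuous_fderiv_section (hΨ : ContDiff ℝ 1 Ψ) :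
    Continuous fun q : E × ℝ => fderiv ℝ (fun z => Ψ (z, q.2)) q.1 := by
  simp_rw [fderiv_section_eq (hΨ.differentiable one_ne_zero _)]
  exact (hΨ.continuous_fderiv one_ne_zero).clm_comp continuous_const

lemma hasDerivAt_comp_prodMk_self {γ : ℝ → E} {w : E} {t : ℝ} (hΨ : DifferentiableAt ℝ Ψ (γ t, t))
    (hγ : HasDerivAt γ w t) :
    HasDerivAt (fun τ => Ψ (γ τ, τ))
      (fderiv ℝ (fun z => Ψ (z, t)) (γ t) w + deriv (fun τ => Ψ (γ t, τ)) t) t := by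
  have htime : HasDerivAt (fun τ => Ψ (γ t, τ)) (fderiv ℝ Ψ (γ t, t) (0, 1)) t :=
    hΨ.hasFDerivAt.comp_hasDerivAt t ((hasDerivAt_const t (γ t)).prodMk (hasDerivAt_id t))
  rw [fderiv_section_eq hΨ, htime.deriv, ContinuousLinearMap.comp_apply,
    ContinuousLinearMap.inl_apply, ← map_add, Prod.mk_add_mk, add_zero, zero_add]
  exact hΨ.hasFDerivAt.comp_hasDerivAt (f := fun τ => (γ τ, τ)) t (hγ.prodMk (hasDerivAt_id t))

end Sections

section DotProduct

variable {n : Type*} [Fintype n]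

lemma HasDerivAt.dotProduct {a b : ℝ → n → ℝ} {a' b' : n → ℝ} {s : ℝ} (ha : HasDerivAt a a' s)
    (hb : HasDerivAt b b' s) :
    HasDerivAt (fun σ => a σ ⬝ᵥ b σ) (a' ⬝ᵥ b s + a s ⬝ᵥ b') s := by
  have : HasDerivAt (fun σ => ∑ i, a σ i * b σ i) (∑ i, (a' i * b s i + a s i * b' i)) s :=
    HasDerivAt.fun_sum fun i _ => (hasDerivAt_pi.1 ha i).mul (hasDerivAt_pi.1 hb i)
  exact this.congr_deriv (Finset.sum_add_distrib)

lemma abs_dotProduct_le (x y : n → ℝ) : |x ⬝ᵥ y| ≤ Fintype.card n * ‖x‖ * ‖y‖ := by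
  calc |x ⬝ᵥ y| ≤ ∑ i, |x i| * |y i| := by
        simpa only [abs_mul, dotProduct] using
          Finset.abs_sum_le_sum_abs (fun i => x i * y i) Finset.univ
    _ ≤ ∑ _i : n, ‖x‖ * ‖y‖ := Finset.sum_le_sum fun i _ =>
        mul_le_mul (norm_le_pi_norm x i) (norm_le_pi_norm y i) (abs_nonneg _) (norm_nonneg _)
    _ = Fintype.card n * ‖x‖ * ‖y‖ := by simp [mul_assoc]

lemma abs_dotProduct_sub_dotProduct_le {a b c e : n → ℝ} {A B C D : ℝ} (ha : ‖a‖ ≤ A)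
    (hb : ‖b‖ ≤ B) (hc : ‖c‖ ≤ C) (he : ‖e‖ ≤ D) :
    |a ⬝ᵥ b - c ⬝ᵥ e| ≤ Fintype.card n * (A * B + C * D) := by
  have hA : 0 ≤ A := (norm_nonneg a).trans ha
  have hC : 0 ≤ C := (norm_nonneg c).trans hc
  calc |a ⬝ᵥ b - c ⬝ᵥ e| ≤ |a ⬝ᵥ b| + |c ⬝ᵥ e| := abs_sub _ _
    _ ≤ Fintype.card n * ‖a‖ * ‖b‖ + Fintype.card n * ‖c‖ * ‖e‖ :=
        add_le_add (abs_dotProduct_le a b) (abs_dotProduct_le c e)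
    _ ≤ Fintype.card n * (A * B + C * D) := by
        rw [mul_add, ← mul_assoc, ← mul_assoc]
        gcongr

end DotProduct

section Gradient

variable {n : Type*} [Fintype n] [DecidableEq n]

/-- The gradient for the dot product on `n → ℝ`; Mathlib's `gradient` needs an inner product
space, and `n → ℝ` carries the sup norm. -/
noncomputable def grad (f : (n → ℝ) → ℝ) (y : n → ℝ) : n → ℝ :=
  fun i => fderiv ℝ f y (Pi.single i 1)

lemma grad_dotProduct (f : (n → ℝ) → ℝ) (y v : n → ℝ) : grad f y ⬝ᵥ v = fderiv ℝ f y v := by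
  conv_rhs => rw [pi_eq_sum_univ v]
  simp only [grad, dotProduct, map_sum, map_smul, smul_eq_mul, mul_comm]
  refine Finset.sum_congr rfl fun i _ => ?_
  congr 2
  ext j
  simp [Pi.single_apply, eq_comm]

lemma continuous_grad_section {P : (n → ℝ) × ℝ → ℝ} (hP : ContDiff ℝ 1 P) :
    Continuous fun q : (n → ℝ) × ℝ => grad (fun z => P (z, q.2)) q.1 :=
  continuous_pi fun _ => (continuous_fderiv_section hP).clm_apply continuous_const

end Gradient

section Circulation

variable {n : Type*} [Fintype n]

/-- With `h = t - t₀`, both terms of the right-hand integrand are `o(h)` in the application. What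
is discarded is the `s`-derivative `Φ'` of `a ⬝ᵥ (x - x₀) - h (p + |a|² / 2)`, periodic on the
closed curve: it is the integration by parts moving `∂ₛ` from `x - x₀` onto `a`, plus the exact
differentials `g ⬝ᵥ w₀ = ∂ₛ p` and `a' ⬝ᵥ a = ∂ₛ |a|² / 2`. -/
lemma integral_dotProduct_sub_integral_dotProduct {x x₀ w w₀ a a₀ a' g : ℝ → n → ℝ} {p : ℝ → ℝ}
    (h : ℝ) (hx : ∀ s, HasDerivAt x (w s) s) (hx₀ : ∀ s, HasDerivAt x₀ (w₀ s) s)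
    (ha : ∀ s, HasDerivAt a (a' s) s) (hp : ∀ s, HasDerivAt p (g s ⬝ᵥ w₀ s) s)
    (hw : Continuous w) (hw₀ : Continuous w₀) (ha' : Continuous a') (hg : Continuous g)
    (ha₀ : Continuous a₀) (hx1 : x 0 = x 1) (hx₀1 : x₀ 0 = x₀ 1) (ha1 : a 0 = a 1)
    (hp1 : p 0 = p 1) :
    (∫ s in (0:ℝ)..1, a s ⬝ᵥ w s) - ∫ s in (0:ℝ)..1, a₀ s ⬝ᵥ w₀ s
      = ∫ s in (0:ℝ)..1, ((a s - a₀ s + h • g s) ⬝ᵥ w₀ s - a' s ⬝ᵥ (x s - x₀ s - h • a s)) := by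
  have hxc : Continuous x := continuous_iff_continuousAt.2 fun s => (hx s).continuousAt
  have hx₀c : Continuous x₀ := continuous_iff_continuousAt.2 fun s => (hx₀ s).continuousAt
  have hac : Continuous a := continuous_iff_continuousAt.2 fun s => (ha s).continuousAt
  set Φ' : ℝ → ℝ := fun s => a' s ⬝ᵥ (x s - x₀ s) + a s ⬝ᵥ (w s - w₀ s)
    - h * (g s ⬝ᵥ w₀ s + (a' s ⬝ᵥ a s + a s ⬝ᵥ a' s) / 2)
  have hΦ : ∀ s, HasDerivAt (fun σ => a σ ⬝ᵥ (x σ - x₀ σ) - h * (p σ + a σ ⬝ᵥ a σ / 2)) (Φ' s) s :=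
    fun s => ((ha s).dotProduct ((hx s).sub (hx₀ s))).sub
      (((hp s).add (((ha s).dotProduct (ha s)).div_const 2)).const_mul h)
  have hΦ'c : Continuous Φ' := by fun_prop
  have hexact : ∫ s in (0:ℝ)..1, Φ' s = 0 := by
    rw [intervalIntegral.integral_eq_sub_of_hasDerivAt (fun s _ => hΦ s)
      (hΦ'c.intervalIntegrable _ _)]
    simp only [hx1, hx₀1, ha1, hp1, sub_self]
  calc (∫ s in (0:ℝ)..1, a s ⬝ᵥ w s) - ∫ s in (0:ℝ)..1, a₀ s ⬝ᵥ w₀ s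
      = ∫ s in (0:ℝ)..1, (a s ⬝ᵥ w s - a₀ s ⬝ᵥ w₀ s) :=
        (intervalIntegral.integral_sub
          ((by fun_prop : Continuous fun s => a s ⬝ᵥ w s).intervalIntegrable _ _)
          ((by fun_prop : Continuous fun s => a₀ s ⬝ᵥ w₀ s).intervalIntegrable _ _)).symm
    _ = ∫ s in (0:ℝ)..1,
          (((a s - a₀ s + h • g s) ⬝ᵥ w₀ s - a' s ⬝ᵥ (x s - x₀ s - h • a s)) + Φ' s) := by
        refine intervalIntegral.integral_congr fun s _ => ?_
        simp only [Φ', sub_dotProduct, add_dotProduct, dotProduct_sub, smul_dotProduct,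
          dotProduct_smul, smul_eq_mul, dotProduct_comm (a s) (a' s)]
        ring
    _ = ∫ s in (0:ℝ)..1, ((a s - a₀ s + h • g s) ⬝ᵥ w₀ s - a' s ⬝ᵥ (x s - x₀ s - h • a s)) := by
        rw [intervalIntegral.integral_add (Continuous.intervalIntegrable (by fun_prop) _ _)
          (hΦ'c.intervalIntegrable _ _), hexact, add_zero]

lemma hasDerivAt_integral_dotProduct_deriv_eq_zero {X U G : ℝ → ℝ → n → ℝ} {p : ℝ → ℝ} {t₀ : ℝ}
    (hX : ∀ t, ContDiff ℝ 1 (X t)) (hU : ∀ t, ContDiff ℝ 1 (U t))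
    (hXt : ∀ t s, HasDerivAt (X · s) (U t s) t) (hUt : ∀ t s, HasDerivAt (U · s) (-G t s) t)
    (hp : ∀ s, HasDerivAt p (G t₀ s ⬝ᵥ deriv (X t₀) s) s)
    (hXper : ∀ t, X t 0 = X t 1) (hUper : ∀ t, U t 0 = U t 1) (hpper : p 0 = p 1)
    (hUc : Continuous fun q : ℝ × ℝ => U q.1 q.2) (hGc : Continuous fun q : ℝ × ℝ => G q.1 q.2)
    (hU' : ∃ C, ∀ᶠ t in 𝓝 t₀, ∀ s ∈ Icc (0:ℝ) 1, ‖deriv (U t) s‖ ≤ C) :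
    HasDerivAt (fun t => ∫ s in (0:ℝ)..1, U t s ⬝ᵥ deriv (X t) s) 0 t₀ := by
  have hXd : ∀ t s, HasDerivAt (X t) (deriv (X t) s) s := fun t s =>
    ((hX t).differentiable one_ne_zero s).hasDerivAt
  have hUd : ∀ t s, HasDerivAt (U t) (deriv (U t) s) s := fun t s =>
    ((hU t).differentiable one_ne_zero s).hasDerivAt
  obtain ⟨C, hC⟩ := hU'
  obtain ⟨Cw, hCw⟩ := (isCompact_Icc (a := (0:ℝ)) (b := 1)).exists_bound_of_continuousOn
    ((hX t₀).continuous_deriv le_rfl).continuousOn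
  have hCw₀ : 0 ≤ Cw := (norm_nonneg _).trans (hCw 0 ⟨le_rfl, zero_le_one⟩)
  rw [hasDerivAt_iff_isLittleO, Asymptotics.isLittleO_iff]
  intro ε hε
  set M : ℝ := Fintype.card n * (Cw + |C|) + 1
  have hM : 0 < M := by positivity
  have hε' : 0 < ε / M := div_pos hε hM
  have hUexp := eventually_norm_sub_sub_smul_le (isCompact_Icc (a := (0:ℝ)) (b := 1)) (t₀ := t₀)
    (f := U) (f' := fun t s => -G t s) (fun s _ τ => hUt τ s) hGc.neg.continuousOn hε'
  have hXexp := eventually_norm_sub_sub_smul_le (isCompact_Icc (a := (0:ℝ)) (b := 1)) (t₀ := t₀)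
    (f := X) (f' := U) (fun s _ τ => hXt τ s) hUc.continuousOn hε'
  filter_upwards [hC, hUexp, hXexp] with t hCt hUt' hXt'
  rw [smul_zero, sub_zero, integral_dotProduct_sub_integral_dotProduct (t - t₀) (hXd t) (hXd t₀)
    (hUd t) hp ((hX t).continuous_deriv le_rfl) ((hX t₀).continuous_deriv le_rfl)
    ((hU t).continuous_deriv le_rfl) (hGc.comp (continuous_const.prodMk continuous_id))
    (hU t₀).continuous (hXper t) (hXper t₀) (hUper t) hpper]
  have hpointwise : ∀ s ∈ uIoc (0:ℝ) 1, ‖(U t s - U t₀ s + (t - t₀) • G t₀ s) ⬝ᵥ deriv (X t₀) s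
      - deriv (U t) s ⬝ᵥ (X t s - X t₀ s - (t - t₀) • U t s)‖ ≤ ε * |t - t₀| := by
    intro s hs
    have hs : s ∈ Icc (0:ℝ) 1 := Ioc_subset_Icc_self (by rwa [uIoc_of_le zero_le_one] at hs)
    have hU₁ : ‖U t s - U t₀ s + (t - t₀) • G t₀ s‖ ≤ ε / M * |t - t₀| := by
      simpa only [smul_neg, sub_neg_eq_add] using hUt' t₀ left_mem_uIcc s hs
    have hC₀ : 0 ≤ C := (norm_nonneg _).trans (hCt s hs)
    have hK : Fintype.card n * (Cw + C) ≤ M := by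
      simp only [M, abs_of_nonneg hC₀]; linarith
    calc _ ≤ Fintype.card n * (ε / M * |t - t₀| * Cw + C * (ε / M * |t - t₀|)) :=
          abs_dotProduct_sub_dotProduct_le hU₁ (hCw s hs) (hCt s hs) (hXt' t right_mem_uIcc s hs)
      _ = ε / M * (Fintype.card n * (Cw + C)) * |t - t₀| := by ring
      _ ≤ ε / M * M * |t - t₀| := by gcongr
      _ = ε * |t - t₀| := by rw [div_mul_cancel₀ _ hM.ne']
  simpa [Real.norm_eq_abs] using intervalIntegral.norm_integral_le_of_norm_le_const hpointwise

end Circulation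

lemma hasDerivAt_velocity_along_trajectory {d : ℕ} {u : (Fin d → ℝ) → ℝ → Fin d → ℝ}
    {P : (Fin d → ℝ) → ℝ → ℝ} (hu : ContDiff ℝ 1 (fun p : (Fin d → ℝ) × ℝ => u p.1 p.2))
    (heuler : ∀ (y : Fin d → ℝ) (t : ℝ) (i : Fin d),
      deriv (fun s => u y s i) t
        + (∑ j, fderiv ℝ (fun z => u z t i) y (Pi.single j 1) * u y t j)
        + fderiv ℝ (fun z => P z t) y (Pi.single i 1) = 0)
    {γ : ℝ → Fin d → ℝ} {t : ℝ} (hγ : HasDerivAt γ (u (γ t) t) t) :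
    HasDerivAt (fun τ => u (γ τ) τ) (-grad (fun z => P z t) (γ t)) t := by
  refine hasDerivAt_pi.2 fun i => ?_
  have hui : ContDiff ℝ 1 (fun p : (Fin d → ℝ) × ℝ => u p.1 p.2 i) :=
    (contDiff_apply ℝ ℝ i).comp hu
  have hchain := hasDerivAt_comp_prodMk_self (hui.differentiable one_ne_zero _) hγ
  rw [← grad_dotProduct] at hchain
  convert hchain using 1
  have := heuler (γ t) t i
  simp only [grad, dotProduct, Pi.neg_apply] at this ⊢
  linarith

theorem hasDerivAt_circulation {d : ℕ} {u : (Fin d → ℝ) → ℝ → Fin d → ℝ}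
    {P : (Fin d → ℝ) → ℝ → ℝ} {Q : ℝ → (Fin d → ℝ) → Fin d → ℝ} {η : ℝ → Fin d → ℝ}
    (hu : ContDiff ℝ 1 (fun p : (Fin d → ℝ) × ℝ => u p.1 p.2))
    (hP : ContDiff ℝ 1 (fun p : (Fin d → ℝ) × ℝ => P p.1 p.2))
    (heuler : ∀ (y : Fin d → ℝ) (t : ℝ) (i : Fin d),
      deriv (fun s => u y s i) t
        + (∑ j, fderiv ℝ (fun z => u z t i) y (Pi.single j 1) * u y t j)
        + fderiv ℝ (fun z => P z t) y (Pi.single i 1) = 0)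
    (hQ0 : Q 0 = id)
    (hflow : ∀ (q : Fin d → ℝ) (t : ℝ), HasDerivAt (fun s => Q s q) (u (Q t q) t) t)
    (hQreg : ∀ t, ContDiff ℝ 1 (Q t)) (hη : ContDiff ℝ 1 η) (hclosed : η 0 = η 1) (t₀ : ℝ) :
    HasDerivAt (fun t => ∫ s in (0:ℝ)..1, u (Q t (η s)) t ⬝ᵥ deriv (fun σ => Q t (η σ)) s)
      0 t₀ := by
  have hQ : IsFlow (fun t x => u x t) Q := ⟨hflow, fun x => by rw [hQ0, id]⟩
  have hX : ∀ t, ContDiff ℝ 1 fun s => Q t (η s) := fun t => (hQreg t).comp hη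
  have hXc : Continuous fun q : ℝ × ℝ => Q q.1 (η q.2) :=
    (hQ.continuous_uncurry hu.locallyLipschitz).comp
      (continuous_fst.prodMk (hη.continuous.comp continuous_snd))
  have hpressure : ∀ s, HasDerivAt (fun σ => P (Q t₀ (η σ)) t₀)
      (grad (fun z => P z t₀) (Q t₀ (η s)) ⬝ᵥ deriv (fun σ => Q t₀ (η σ)) s) s := fun s => by
    rw [grad_dotProduct]
    exact ((hP.comp (contDiff_id.prodMk contDiff_const)).differentiable one_ne_zero _).hasFDerivAt
      |>.comp_hasDerivAt s (((hX t₀).differentiable one_ne_zero s).hasDerivAt)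
  exact hasDerivAt_integral_dotProduct_deriv_eq_zero (X := fun t s => Q t (η s))
    (U := fun t s => u (Q t (η s)) t) (G := fun t s => grad (fun z => P z t) (Q t (η s))) hX
    (fun t => (hu.comp (contDiff_id.prodMk contDiff_const)).comp (hX t))
    (fun t s => hflow (η s) t)
    (fun t s => hasDerivAt_velocity_along_trajectory hu heuler (hflow (η s) t)) hpressure
    (fun t => by simp only [hclosed]) (fun t => by simp only [hclosed]) (by simp only [hclosed])
    (hu.continuous.comp (hXc.prodMk continuous_fst))
    ((continuous_grad_section hP).comp (hXc.prodMk continuous_fst))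
    (hQ.eventually_norm_deriv_velocity_comp_le hu.locallyLipschitz hη.locallyLipschitz t₀)

theorem kelvin_circulation (d : ℕ)
    (u : (Fin d → ℝ) → ℝ → Fin d → ℝ) (P : (Fin d → ℝ) → ℝ → ℝ)
    (hu : ContDiff ℝ 2 (fun p : (Fin d → ℝ) × ℝ => u p.1 p.2))
    (hP : ContDiff ℝ 1 (fun p : (Fin d → ℝ) × ℝ => P p.1 p.2))
    (heuler : ∀ (y : Fin d → ℝ) (t : ℝ) (i : Fin d),
      deriv (fun s => u y s i) t
        + (∑ j, fderiv ℝ (fun z => u z t i) y (Pi.single j 1) * u y t j)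
        + fderiv ℝ (fun z => P z t) y (Pi.single i 1) = 0)
    (Q : ℝ → (Fin d → ℝ) → Fin d → ℝ)
    (hQ0 : Q 0 = id)
    (hflow : ∀ (q : Fin d → ℝ) (t : ℝ), HasDerivAt (fun s => Q s q) (u (Q t q) t) t)
    (hQreg : ∀ t, ContDiff ℝ 1 (Q t))
    (η : ℝ → Fin d → ℝ) (hη : ContDiff ℝ 1 η) (hclosed : η 0 = η 1) :
    ∀ t₁ t₂ : ℝ,
      (∫ s in (0:ℝ)..1, (u (Q t₁ (η s)) t₁) ⬝ᵥ deriv (fun σ => Q t₁ (η σ)) s)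
        = ∫ s in (0:ℝ)..1, (u (Q t₂ (η s)) t₂) ⬝ᵥ deriv (fun σ => Q t₂ (η σ)) s := by
  have hΓ := hasDerivAt_circulation (hu.of_le one_le_two) hP heuler hQ0 hflow hQreg hη hclosed
  exact is_const_of_deriv_eq_zero (fun t => (hΓ t).differentiableAt) (fun t => (hΓ t).deriv)
end

section
/- For a Liouville vector field construction: if u : ℝ^{2d} → ℝ^{2d} with C(u) = Du - (Du)ᵀ invertible at a point, H C¹ with u = -C(u)⁻¹∇H, and X = C(u)⁻¹ u, then X·∇H = |u|² at that point; in particular if u ≠ 0 then X is transversal to the level set of H. -/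
open Matrix

theorem liouville_field_transversal (d : ℕ)
    (u : (Fin (2 * d) → ℝ) → Fin (2 * d) → ℝ) (x : Fin (2 * d) → ℝ)
    (H : (Fin (2 * d) → ℝ) → ℝ)
    (C : Matrix (Fin (2 * d)) (Fin (2 * d)) ℝ)
    (hC : ∀ i j, C i j = fderiv ℝ (fun y => u y i) x (Pi.single j 1)
        - fderiv ℝ (fun y => u y j) x (Pi.single i 1))
    (hinv : IsUnit C.det)
    (gradH : Fin (2 * d) → ℝ)
    (hgrad : ∀ j, gradH j = fderiv ℝ H x (Pi.single j 1))
    (hu : u x = -(C⁻¹.mulVec gradH))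
    (X : Fin (2 * d) → ℝ) (hX : X = C⁻¹.mulVec (u x)) :
    X ⬝ᵥ gradH = u x ⬝ᵥ u x ∧ (u x ≠ 0 → X ⬝ᵥ gradH ≠ 0) := by
  have hT : Cᵀ = -C := by
    ext i j
    simp only [Matrix.transpose_apply, Matrix.neg_apply, hC i j, hC j i]
    ring
  have hnegC : (-C)⁻¹ = -(C⁻¹) := by
    apply Matrix.inv_eq_right_inv
    rw [neg_mul_neg, Matrix.mul_nonsing_inv C hinv]
  have hinvT : (C⁻¹)ᵀ = -(C⁻¹) := by
    rw [Matrix.transpose_nonsing_inv, hT, hnegC]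
  have key : X ⬝ᵥ gradH = u x ⬝ᵥ u x := by
    rw [hX, dotProduct_comm, Matrix.dotProduct_mulVec,
      ← Matrix.mulVec_transpose, hinvT, Matrix.neg_mulVec, ← hu,
      dotProduct_comm]
  refine ⟨key, fun h => ?_⟩
  rw [key]
  simpa using (dotProduct_self_eq_zero (v := u x)).not.mpr h
end
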